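/- arXiv:1411.5985 — 6 statements merged into one kernel-verified Lean document; each statement's English description precedes it below -/
import Mathlib

section
/- Let V be a finite set of points in ℝⁿ (Euclidean space) and let X be the union, over all pairs of points u, v ∈ V, of the closed segments [u, v]. Then X is 0-tight: for every nonzero continuous linear functional φ : ℝⁿ → ℝ and every real number c, the set X ∩ {x | φ(x) < c} is preconnected. -/
/-!
Every point of the sublevel part of the skeleton lies on a segment `[u, v]` whose endpoint `u`
is itself below the level, and the part of `[u, v]` below the level is convex. Fixing one vertex
`w` below the level, each such point is joined to `w` through `[w, u]` and the convex piece of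
`[u, v]`, and `[w, u]` stays below the level because half-spaces are convex.
-/

open Set

section Segment

variable {𝕜 E : Type*} [Field 𝕜] [LinearOrder 𝕜] [IsStrictOrderedRing 𝕜]
  [AddCommGroup E] [Module 𝕜 E]

theorem LinearMap.min_le_apply_of_mem_segment (f : E →ₗ[𝕜] 𝕜) {u v x : E}
    (hx : x ∈ segment 𝕜 u v) : min (f u) (f v) ≤ f x := by
  have hfx : f x ∈ segment 𝕜 (f u) (f v) :=
    image_segment 𝕜 f.toAffineMap u v ▸ mem_image_of_mem _ hx
  rw [segment_eq_uIcc] at hfx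
  exact hfx.1

theorem exists_mem_segment_apply_lt_of_mem_iUnion_segment {V : Set E} {f : E →ₗ[𝕜] 𝕜} {c : 𝕜}
    {x : E} (hx : x ∈ (⋃ u ∈ V, ⋃ v ∈ V, segment 𝕜 u v) ∩ {x | f x < c}) :
    ∃ u ∈ V, ∃ v ∈ V, x ∈ segment 𝕜 u v ∧ f u < c := by
  obtain ⟨hxV, hxc : f x < c⟩ := hx
  simp only [mem_iUnion] at hxV
  obtain ⟨u, hu, v, hv, hxuv⟩ := hxV
  rcases min_lt_iff.1 ((f.min_le_apply_of_mem_segment hxuv).trans_lt hxc) with huc | hvc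
  · exact ⟨u, hu, v, hv, hxuv, huc⟩
  · exact ⟨v, hv, u, hu, segment_symm 𝕜 u v ▸ hxuv, hvc⟩

end Segment

theorem isPreconnected_iUnion_segment_inter_halfSpace {E : Type*} [AddCommGroup E] [Module ℝ E]
    [TopologicalSpace E] [ContinuousAdd E] [ContinuousSMul ℝ E]
    (V : Set E) (f : E →ₗ[ℝ] ℝ) (c : ℝ) :
    IsPreconnected ((⋃ u ∈ V, ⋃ v ∈ V, segment ℝ u v) ∩ {x | f x < c}) := by
  set S := ⋃ u ∈ V, ⋃ v ∈ V, segment ℝ u v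
  set H := {x | f x < c}
  have hH : Convex ℝ H := convex_halfSpace_lt f.isLinear c
  have hsegS : ∀ u ∈ V, ∀ v ∈ V, segment ℝ u v ⊆ S := fun u hu v hv =>
    subset_iUnion₂_of_subset u hu (subset_iUnion₂_of_subset v hv subset_rfl)
  rcases (S ∩ H).eq_empty_or_nonempty with hempty | ⟨x₀, hx₀⟩
  · exact hempty ▸ isPreconnected_empty
  obtain ⟨w, hw, -, -, -, hwc⟩ := exists_mem_segment_apply_lt_of_mem_iUnion_segment hx₀
  refine isPreconnected_of_forall w fun x hx => ?_
  obtain ⟨u, hu, v, hv, hxuv, huc⟩ := exists_mem_segment_apply_lt_of_mem_iUnion_segment hx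
  refine ⟨segment ℝ w u ∪ (segment ℝ u v ∩ H), ?_, Or.inl (left_mem_segment ℝ w u),
    Or.inr ⟨hxuv, hx.2⟩, ?_⟩
  · exact union_subset (subset_inter (hsegS w hw u hu) (hH.segment_subset hwc huc))
      (inter_subset_inter_left H (hsegS u hu v hv))
  · exact (convex_segment w u).isPreconnected.union u (right_mem_segment ℝ w u)
      ⟨left_mem_segment ℝ u v, huc⟩ ((convex_segment u v).inter hH).isPreconnected

theorem stmt_3_general {n : ℕ} (V : Finset (EuclideanSpace ℝ (Fin n)))
    (X : Set (EuclideanSpace ℝ (Fin n)))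
    (hX : X = ⋃ u ∈ V, ⋃ v ∈ V, segment ℝ u v)
    (φ : EuclideanSpace ℝ (Fin n) →L[ℝ] ℝ) (c : ℝ) :
    IsPreconnected (X ∩ {x | φ x < c}) :=
  hX ▸ isPreconnected_iUnion_segment_inter_halfSpace (V : Set (EuclideanSpace ℝ (Fin n))) φ c

/-- The 1-skeleton of a simplex is 0-tight: if `X` is the union of all closed
segments between points of a finite set `V ⊆ ℝⁿ`, then for every nonzero
continuous linear functional `φ` and every real `c`, the part of `X` inside the
open half-space `{x | φ x < c}` is preconnected. -/
theorem stmt_3 {n : ℕ} (V : Finset (EuclideanSpace ℝ (Fin n)))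
    (X : Set (EuclideanSpace ℝ (Fin n)))
    (hX : X = ⋃ u ∈ V, ⋃ v ∈ V, segment ℝ u v)
    (φ : EuclideanSpace ℝ (Fin n) →L[ℝ] ℝ) (hφ : φ ≠ 0) (c : ℝ) :
    IsPreconnected (X ∩ {x | φ x < c}) :=
  stmt_3_general V X hX φ c
end

section
/- Let X be a subset of ℝⁿ which is 0-tight, i.e., for every nonzero continuous linear functional φ : ℝⁿ → ℝ and every real c, the set X ∩ {x | φ(x) < c} is preconnected. Let F be a finite subset of X. Then X ∪ convexHull(F) is again 0-tight: for every nonzero continuous linear functional φ and every real c, (X ∪ convexHull(F)) ∩ {x | φ(x) < c} is preconnected. -/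
/-!
A linear functional attains its minimum over `convexHull F` at a point of `F`, so every point
of the hull lying in an open half-space is joined, by a segment inside the hull and the
half-space, to a point of `F ⊆ X` in that half-space. Hence each new point of the cut set is
connected to the cut of `X`, which is preconnected by hypothesis.
-/

open Set

theorem IsPreconnected.union_of_forall_exists_isPreconnected {α : Type*} [TopologicalSpace α]
    {A B : Set α} (hA : IsPreconnected A)
    (h : ∀ y ∈ B, ∃ t ⊆ B, (A ∩ t).Nonempty ∧ y ∈ t ∧ IsPreconnected t) :
    IsPreconnected (A ∪ B) := by
  rcases B.eq_empty_or_nonempty with rfl | ⟨y₀, hy₀⟩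
  · simpa using hA
  obtain ⟨x₀, hx₀⟩ : A.Nonempty := by
    obtain ⟨t, -, ⟨x, hxA, -⟩, -⟩ := h y₀ hy₀
    exact ⟨x, hxA⟩
  refine isPreconnected_of_forall x₀ ?_
  rintro y (hyA | hyB)
  · exact ⟨A, subset_union_left, hx₀, hyA, hA⟩
  · obtain ⟨t, htB, hAt, hyt, ht⟩ := h y hyB
    exact ⟨A ∪ t, union_subset_union_right A htB, Or.inl hx₀, Or.inr hyt, hA.union' hAt ht⟩

theorem LinearMap.exists_segment_subset_convexHull_inter_lt {E : Type*} [AddCommGroup E]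
    [Module ℝ E] (φ : E →ₗ[ℝ] ℝ) {s : Set E} {p : E} (hp : p ∈ convexHull ℝ s) {c : ℝ}
    (hpc : φ p < c) : ∃ v ∈ s, segment ℝ v p ⊆ convexHull ℝ s ∩ {x | φ x < c} := by
  obtain ⟨v, hvs, hvp⟩ := (φ.concaveOn convex_univ).exists_le_of_mem_convexHull (subset_univ s) hp
  refine ⟨v, hvs, subset_inter ?_ ?_⟩
  · exact (convex_convexHull ℝ s).segment_subset (subset_convexHull ℝ s hvs) hp
  · exact (convex_halfSpace_lt φ.isLinear c).segment_subset (hvp.trans_lt hpc) hpc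

/-- Attaching the convex hull of a finite subset of a 0-tight set preserves
0-tightness: if every open half-space cuts `X` in a preconnected piece, and
`F` is a finite subset of `X`, then the same holds for `X ∪ convexHull ℝ F`. -/
theorem stmt_4 {n : ℕ} (X : Set (EuclideanSpace ℝ (Fin n)))
    (htight : ∀ φ : EuclideanSpace ℝ (Fin n) →L[ℝ] ℝ, φ ≠ 0 → ∀ c : ℝ,
      IsPreconnected (X ∩ {x | φ x < c}))
    (F : Finset (EuclideanSpace ℝ (Fin n))) (hF : ↑F ⊆ X)
    (φ : EuclideanSpace ℝ (Fin n) →L[ℝ] ℝ) (hφ : φ ≠ 0) (c : ℝ) :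
    IsPreconnected ((X ∪ convexHull ℝ (↑F : Set (EuclideanSpace ℝ (Fin n)))) ∩
      {x | φ x < c}) := by
  rw [union_inter_distrib_right]
  refine (htight φ hφ c).union_of_forall_exists_isPreconnected ?_
  rintro y ⟨hy, hyc⟩
  obtain ⟨v, hvF, hseg⟩ :=
    (φ : EuclideanSpace ℝ (Fin n) →ₗ[ℝ] ℝ).exists_segment_subset_convexHull_inter_lt hy hyc
  have hv : v ∈ segment ℝ v y := left_mem_segment ℝ v y
  exact ⟨segment ℝ v y, hseg, ⟨v, ⟨hF hvF, (hseg hv).2⟩, hv⟩, right_mem_segment ℝ v y,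
    (convex_segment v y).isPreconnected⟩
end

section
/- Let X be a subset of ℝⁿ which is 0-tight, i.e., for every nonzero continuous linear functional φ : ℝⁿ → ℝ and every real c, the set X ∩ {x | φ(x) < c} is preconnected. Let F be a finite subset of X and let w ∈ convexHull(F). Then the set X ∪ (⋃_{u ∈ F} [w, u]), obtained by adjoining to X the segments from w to each point of F, is again 0-tight. -/
/-!
Let `H = {φ < c}`. Each piece `[w, u] ∩ H` is convex, hence preconnected, and it is nonempty only
if `w ∈ H` or `u ∈ H`, because `{φ ≥ c}` is convex as well. Since `w` lies in the convex hull of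
`F`, some `u₀ ∈ F` has `φ u₀ ≤ φ w`; then `(X ∩ H) ∪ ([w, u₀] ∩ H)` is preconnected, and every
nonempty piece `[w, u] ∩ H` meets it, at `w` when `w ∈ H` and at `u` otherwise.
-/

open Set

theorem IsPreconnected.union_biUnion {α ι : Type*} [TopologicalSpace α] {A : Set α}
    {t : Set ι} {B : ι → Set α} (hA : IsPreconnected A) (hB : ∀ i ∈ t, IsPreconnected (B i))
    (hmeet : ∀ i ∈ t, (B i).Nonempty → (A ∩ B i).Nonempty) :
    IsPreconnected (A ∪ ⋃ i ∈ t, B i) := by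
  rcases A.eq_empty_or_nonempty with rfl | ⟨x, hx⟩
  · convert isPreconnected_empty
    refine eq_empty_of_forall_notMem fun y hy => ?_
    rw [empty_union] at hy
    obtain ⟨i, hi, hyi⟩ := mem_iUnion₂.1 hy
    simpa using hmeet i hi ⟨y, hyi⟩
  · refine isPreconnected_of_forall x fun y hy => ?_
    rcases hy with hyA | hyB
    · exact ⟨A, subset_union_left, hx, hyA, hA⟩
    · obtain ⟨i, hi, hyi⟩ := mem_iUnion₂.1 hyB
      exact ⟨A ∪ B i, union_subset_union_right _ (subset_biUnion_of_mem hi), Or.inl hx,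
        Or.inr hyi, hA.union' (hmeet i hi ⟨y, hyi⟩) (hB i hi)⟩

theorem lt_or_lt_of_mem_segment_of_lt {𝕜 E : Type*} [Field 𝕜] [LinearOrder 𝕜]
    [IsStrictOrderedRing 𝕜] [AddCommGroup E] [Module 𝕜 E] (f : E →ₗ[𝕜] 𝕜) {c : 𝕜}
    {w u x : E} (hx : x ∈ segment 𝕜 w u) (hfx : f x < c) : f w < c ∨ f u < c := by
  by_contra! h
  exact (convex_halfSpace_ge f.isLinear c).segment_subset h.1 h.2 hx |>.not_gt hfx

/-- Adjoining to a 0-tight set `X` a new vertex `w` lying in the convex hull of a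
finite subset `F ⊆ X`, together with the segments from `w` to each point of `F`,
preserves 0-tightness. -/
theorem stmt_5 {n : ℕ} (X : Set (EuclideanSpace ℝ (Fin n)))
    (htight : ∀ φ : EuclideanSpace ℝ (Fin n) →L[ℝ] ℝ, φ ≠ 0 → ∀ c : ℝ,
      IsPreconnected (X ∩ {x | φ x < c}))
    (F : Finset (EuclideanSpace ℝ (Fin n))) (hF : ↑F ⊆ X)
    (w : EuclideanSpace ℝ (Fin n))
    (hw : w ∈ convexHull ℝ (↑F : Set (EuclideanSpace ℝ (Fin n))))
    (φ : EuclideanSpace ℝ (Fin n) →L[ℝ] ℝ) (hφ : φ ≠ 0) (c : ℝ) :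
    IsPreconnected ((X ∪ ⋃ u ∈ F, segment ℝ w u) ∩ {x | φ x < c}) := by
  set H := {x | φ x < c}
  set S := fun u => segment ℝ w u ∩ H
  have hS (u) : IsPreconnected (S u) :=
    ((convex_segment w u).inter (convex_halfSpace_lt φ.toLinearMap.isLinear c)).isPreconnected
  have hS_nonempty {u} (hu : (S u).Nonempty) : φ w < c ∨ φ u < c :=
    let ⟨_, hx, hxc⟩ := hu
    lt_or_lt_of_mem_segment_of_lt φ.toLinearMap hx hxc
  obtain ⟨u₀, hu₀F, hu₀w⟩ :=
    (φ.toLinearMap.concaveOn convex_univ).exists_le_of_mem_convexHull (subset_univ _) hw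
  have hA : IsPreconnected (X ∩ H ∪ S u₀) := by
    rcases (S u₀).eq_empty_or_nonempty with h | h
    · simpa [h] using htight φ hφ c
    · have hu₀c : φ u₀ < c := (hS_nonempty h).elim hu₀w.trans_lt id
      exact (htight φ hφ c).union' ⟨u₀, ⟨hF hu₀F, hu₀c⟩, right_mem_segment ℝ w u₀, hu₀c⟩ (hS u₀)
  have hsplit : (X ∪ ⋃ u ∈ F, segment ℝ w u) ∩ H = X ∩ H ∪ S u₀ ∪ ⋃ u ∈ F, S u := by
    rw [union_inter_distrib_right, iUnion₂_inter, union_assoc,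
      union_eq_right.2 (subset_iUnion₂ (s := fun u (_ : u ∈ F) => S u) u₀ hu₀F)]
  rw [hsplit]
  refine hA.union_biUnion (fun u _ => hS u) fun u hu hSu => ?_
  rcases hS_nonempty hSu with hwc | huc
  · exact ⟨w, Or.inr ⟨left_mem_segment ℝ w u₀, hwc⟩, left_mem_segment ℝ w u, hwc⟩
  · exact ⟨u, Or.inl ⟨hF hu, huc⟩, right_mem_segment ℝ w u, huc⟩
end

section
/- Let ι be a finite index type, let v : ι → ℝⁿ be any family of points, and let T be a collection of 3-element subsets of ι such that every 2-element subset of ι is contained in some member of T. Let X = ⋃_{t ∈ T} convexHull(v(t)) be the union of the corresponding closed triangles. Then X is 0-tight: for every nonzero continuous linear functional φ : ℝⁿ → ℝ and every real c, X ∩ {x | φ(x) < c} is preconnected. -/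
/-!
Every point `x` of a triangle lies above one of its vertices for `φ`: if `φ x < c` then some
vertex `v i` of that triangle is in the half-space too, and the segment from `x` to `v i` stays
in the triangle and in the half-space. Since every pair of indices spans an edge of some triangle,
any two such vertices are joined by a segment inside the half-space. Hence any two points of
`X ∩ {φ < c}` are joined by a polygonal path of three segments inside it.
-/

open Set
open scoped Convex

theorem exists_apply_le_of_mem_convexHull {𝕜 E : Type*} [Field 𝕜] [LinearOrder 𝕜]
    [IsStrictOrderedRing 𝕜] [AddCommGroup E] [Module 𝕜 E] (φ : E →ₗ[𝕜] 𝕜) {s : Set E} {x : E}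
    (hx : x ∈ convexHull 𝕜 s) : ∃ p ∈ s, φ p ≤ φ x := by
  by_contra! h
  have : convexHull 𝕜 s ⊆ {y | φ x < φ y} :=
    convexHull_min h (convex_halfSpace_gt φ.isLinear _)
  exact lt_irrefl _ (this hx)

theorem isPreconnected_of_forall_exists_segment_subset {E : Type*} [AddCommGroup E] [Module ℝ E]
    [TopologicalSpace E] [ContinuousAdd E] [ContinuousSMul ℝ E] {S P : Set E}
    (hS : ∀ x ∈ S, ∃ p ∈ P, [x -[ℝ] p] ⊆ S) (hP : ∀ p ∈ P, ∀ q ∈ P, [p -[ℝ] q] ⊆ S) :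
    IsPreconnected S := by
  rcases S.eq_empty_or_nonempty with rfl | hne
  · exact isPreconnected_empty
  refine (isPathConnected_iff.2 ⟨hne, fun x hx y hy => ?_⟩).isConnected.isPreconnected
  obtain ⟨p, hp, hxp⟩ := hS x hx
  obtain ⟨q, hq, hyq⟩ := hS y hy
  exact ((JoinedIn.of_segment_subset hxp).trans (.of_segment_subset (hP p hp q hq))).trans
    (JoinedIn.of_segment_subset hyq).symm

theorem exists_mem_and_mem_of_forall_card_eq_two {ι : Type*} {T : Set (Finset ι)}
    (hT : ∀ s : Finset ι, s.card = 2 → ∃ t ∈ T, s ⊆ t) {t₀ : Finset ι} (ht₀ : t₀ ∈ T) {i : ι}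
    (hi : i ∈ t₀) (j : ι) : ∃ t ∈ T, i ∈ t ∧ j ∈ t := by
  classical
  rcases eq_or_ne i j with rfl | hij
  · exact ⟨t₀, ht₀, hi, hi⟩
  obtain ⟨t, ht, hsub⟩ := hT {i, j} (Finset.card_pair hij)
  exact ⟨t, ht, hsub (by simp), hsub (by simp)⟩

theorem stmt_6_general {n : ℕ} {ι : Type*}
    (v : ι → EuclideanSpace ℝ (Fin n))
    (T : Set (Finset ι))
    (hTcov : ∀ s : Finset ι, s.card = 2 → ∃ t ∈ T, s ⊆ t)
    (X : Set (EuclideanSpace ℝ (Fin n)))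
    (hX : X = ⋃ t ∈ T, convexHull ℝ (v '' (↑t : Set ι)))
    (φ : EuclideanSpace ℝ (Fin n) →L[ℝ] ℝ) (c : ℝ) :
    IsPreconnected (X ∩ {x | φ x < c}) := by
  subst hX
  set H := {x | φ x < c}
  have hH : Convex ℝ H := convex_halfSpace_lt φ.toLinearMap.isLinear c
  have segment_subset {t : Finset ι} (ht : t ∈ T) {x y : EuclideanSpace ℝ (Fin n)}
      (hx : x ∈ convexHull ℝ (v '' ↑t)) (hxH : x ∈ H) (hy : y ∈ convexHull ℝ (v '' ↑t))
      (hyH : y ∈ H) : [x -[ℝ] y] ⊆ (⋃ t ∈ T, convexHull ℝ (v '' ↑t)) ∩ H :=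
    (((convex_convexHull ℝ _).inter hH).segment_subset ⟨hx, hxH⟩ ⟨hy, hyH⟩).trans
      (inter_subset_inter_left H fun _ hz => mem_biUnion ht hz)
  refine isPreconnected_of_forall_exists_segment_subset (P := (⋃ t ∈ T, v '' ↑t) ∩ H) ?_ ?_
  · rintro x ⟨hxX, hxH⟩
    obtain ⟨t, ht, hx⟩ := mem_iUnion₂.1 hxX
    obtain ⟨_, ⟨i, hi, rfl⟩, hle⟩ := exists_apply_le_of_mem_convexHull φ.toLinearMap hx
    have hiH : v i ∈ H := hle.trans_lt hxH
    exact ⟨v i, ⟨mem_biUnion ht (mem_image_of_mem v hi), hiH⟩,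
      segment_subset ht hx hxH (subset_convexHull ℝ _ (mem_image_of_mem v hi)) hiH⟩
  · rintro _ ⟨hp, hpH⟩ _ ⟨hq, hqH⟩
    obtain ⟨t₀, ht₀, i, hi, rfl⟩ := mem_iUnion₂.1 hp
    obtain ⟨-, -, j, -, rfl⟩ := mem_iUnion₂.1 hq
    obtain ⟨t, ht, hit, hjt⟩ := exists_mem_and_mem_of_forall_card_eq_two hTcov ht₀ hi j
    exact segment_subset ht (subset_convexHull ℝ _ (mem_image_of_mem v hit)) hpH
      (subset_convexHull ℝ _ (mem_image_of_mem v hjt)) hqH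

/-- A union of straight triangles whose triple system covers all pairs of indices
is 0-tight: if every 2-element subset of `ι` is contained in a member of the
family `T` of 3-element subsets, then the union of the triangles
`convexHull ℝ (v '' t)` for `t ∈ T` meets every open half-space in a
preconnected set. -/
theorem stmt_6 {n : ℕ} {ι : Type*} [Fintype ι]
    (v : ι → EuclideanSpace ℝ (Fin n))
    (T : Set (Finset ι)) (hT3 : ∀ t ∈ T, t.card = 3)
    (hTcov : ∀ s : Finset ι, s.card = 2 → ∃ t ∈ T, s ⊆ t)
    (X : Set (EuclideanSpace ℝ (Fin n)))
    (hX : X = ⋃ t ∈ T, convexHull ℝ (v '' (↑t : Set ι)))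
    (φ : EuclideanSpace ℝ (Fin n) →L[ℝ] ℝ) (hφ : φ ≠ 0) (c : ℝ) :
    IsPreconnected (X ∩ {x | φ x < c}) :=
  stmt_6_general v T hTcov X hX φ c
end

section
/- Let v : ZMod 5 → ℝ⁴ be a family of 5 affinely independent points of ℝ⁴ (the vertices of a 4-simplex), and let M = ⋃_{i ∈ ZMod 5} convexHull{v(i), v(i+1), v(i+2)} be the union of the five triangles with cyclically consecutive vertex triples. Then M is 0-tight: for every nonzero continuous linear functional φ : ℝ⁴ → ℝ and every real c, M ∩ {x | φ(x) < c} is preconnected. -/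
/-!
A triangle meets an open half-space only if one of its vertices does, since the complementary
closed half-space is convex. Every pair of indices mod 5 lies in some cyclic triple
`{k, k+1, k+2}`, so any two vertices span an edge of the band. Hence every point of the band
below the level `c` is joined, inside its own triangle, to a vertex below `c`, and any two such
vertices are joined by an edge below `c`.
-/

open Set

lemma exists_mem_of_convexHull_inter_nonempty {E : Type*} [AddCommGroup E] [Module ℝ E]
    {s H : Set E} (hHc : Convex ℝ Hᶜ)
    (h : (convexHull ℝ s ∩ H).Nonempty) : ∃ p ∈ s, p ∈ H := by
  by_contra! hs
  obtain ⟨x, hxs, hxH⟩ := h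
  exact convexHull_min hs hHc hxs hxH

lemma isPreconnected_iUnion_convexHull_inter {E ι : Type*} [AddCommGroup E] [Module ℝ E]
    [TopologicalSpace E] [IsTopologicalAddGroup E] [ContinuousSMul ℝ E]
    (s : ι → Set E) {H : Set E} (hH : Convex ℝ H) (hHc : Convex ℝ Hᶜ)
    (hs : ∀ i j, ∀ p ∈ s i, ∀ q ∈ s j, ∃ k, p ∈ s k ∧ q ∈ s k) :
    IsPreconnected ((⋃ i, convexHull ℝ (s i)) ∩ H) := by
  rcases eq_empty_or_nonempty ((⋃ i, convexHull ℝ (s i)) ∩ H) with hempty | ⟨x, hx, hxH⟩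
  · rw [hempty]
    exact isPreconnected_empty
  obtain ⟨i, hxi⟩ := mem_iUnion.mp hx
  obtain ⟨p, hpi, hpH⟩ := exists_mem_of_convexHull_inter_nonempty hHc ⟨x, hxi, hxH⟩
  refine isPreconnected_of_forall p fun y ⟨hy, hyH⟩ => ?_
  obtain ⟨j, hyj⟩ := mem_iUnion.mp hy
  obtain ⟨q, hqj, hqH⟩ := exists_mem_of_convexHull_inter_nonempty hHc ⟨y, hyj, hyH⟩
  obtain ⟨k, hpk, hqk⟩ := hs i j p hpi q hqj
  have hsegment : segment ℝ q p ⊆ convexHull ℝ (s k) ∩ H := fun z hz =>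
    ⟨(convex_convexHull ℝ _).segment_subset (subset_convexHull ℝ _ hqk)
      (subset_convexHull ℝ _ hpk) hz, hH.segment_subset hqH hpH hz⟩
  refine ⟨(convexHull ℝ (s j) ∩ H) ∪ segment ℝ q p, union_subset ?_ ?_,
    Or.inr (right_mem_segment ℝ q p), Or.inl ⟨hyj, hyH⟩, ?_⟩
  · exact inter_subset_inter_left H (subset_iUnion (fun i => convexHull ℝ (s i)) j)
  · exact hsegment.trans
      (inter_subset_inter_left H (subset_iUnion (fun i => convexHull ℝ (s i)) k))
  · exact IsPreconnected.union q ⟨subset_convexHull ℝ _ hqj, hqH⟩ (left_mem_segment ℝ q p)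
      ((convex_convexHull ℝ _).inter hH).isPreconnected (convex_segment q p).isPreconnected

lemma ZMod.exists_cyclic_triple_mem (a b : ZMod 5) :
    ∃ k, a ∈ ({k, k + 1, k + 2} : Finset (ZMod 5)) ∧
      b ∈ ({k, k + 1, k + 2} : Finset (ZMod 5)) := by
  revert a b
  decide

theorem stmt_7_general (v : ZMod 5 → EuclideanSpace ℝ (Fin 4))
    (M : Set (EuclideanSpace ℝ (Fin 4)))
    (hM : M = ⋃ i : ZMod 5,
      convexHull ℝ ({v i, v (i + 1), v (i + 2)} : Set (EuclideanSpace ℝ (Fin 4))))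
    (φ : EuclideanSpace ℝ (Fin 4) →L[ℝ] ℝ) (c : ℝ) :
    IsPreconnected (M ∩ {x | φ x < c}) := by
  have htriangle (i : ZMod 5) : ({v i, v (i + 1), v (i + 2)} : Set (EuclideanSpace ℝ (Fin 4))) =
      v '' ↑({i, i + 1, i + 2} : Finset (ZMod 5)) := by
    simp [image_insert_eq]
  have hcompl : {x | φ x < c}ᶜ = {x | c ≤ φ x} := by
    ext x
    simp
  subst hM
  simp_rw [htriangle]
  refine isPreconnected_iUnion_convexHull_inter _ (convex_halfSpace_lt φ.isLinear c)
    (hcompl ▸ convex_halfSpace_ge φ.isLinear c) ?_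
  rintro i j _ ⟨a, -, rfl⟩ _ ⟨b, -, rfl⟩
  obtain ⟨k, hak, hbk⟩ := ZMod.exists_cyclic_triple_mem a b
  exact ⟨k, mem_image_of_mem v hak, mem_image_of_mem v hbk⟩

/-- The canonical polyhedral Möbius band in `ℝ⁴`, the union of the five triangles
`{v i, v (i+1), v (i+2)}` (indices mod 5) on the vertices of a 4-simplex, is
0-tight. -/
theorem stmt_7 (v : ZMod 5 → EuclideanSpace ℝ (Fin 4))
    (hindep : AffineIndependent ℝ v)
    (M : Set (EuclideanSpace ℝ (Fin 4)))
    (hM : M = ⋃ i : ZMod 5,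
      convexHull ℝ ({v i, v (i + 1), v (i + 2)} : Set (EuclideanSpace ℝ (Fin 4))))
    (φ : EuclideanSpace ℝ (Fin 4) →L[ℝ] ℝ) (hφ : φ ≠ 0) (c : ℝ) :
    IsPreconnected (M ∩ {x | φ x < c}) :=
  stmt_7_general v M hM φ c
end

section
/- Let a : ZMod 3 → ℝ² be three affinely independent points of the plane, and in ℝ³ = ℝ² × ℝ set A(i) := (a(i), 0) and B(i) := (a(i), 1) for i ∈ ZMod 3. Let X = ⋃_{i ∈ ZMod 3} convexHull{A(i), A(i+1), B(i+1), B(i)} be the union of the three lateral quadrilateral faces of the resulting triangular prism. Then X is 0-tight: for every nonzero continuous linear functional φ : ℝ³ → ℝ and every real c, X ∩ {x | φ(x) < c} is preconnected. -/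
/-!
Each face meets the half-space `{φ < c}` in a convex set. Orient the faces so that
`φ (P i) ≤ φ (Q i)` (for the prism `φ (B i) - φ (A i)` does not depend on `i`). Then on every
face `φ` is minimised at one of its two bottom vertices, so every point of the cut-off set is
joined, inside its own face, to a bottom vertex, and that vertex is joined to the globally
lowest bottom vertex along the face containing both: any two vertices of a triangle span an edge.
-/

open Set

lemma min_le_of_mem_convexHull_quadrilateral {E : Type*} [AddCommGroup E] [Module ℝ E]
    (φ : E →ₗ[ℝ] ℝ) {p p' q q' y : E} (hq : φ p ≤ φ q) (hq' : φ p' ≤ φ q')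
    (hy : y ∈ convexHull ℝ {p, p', q', q}) : min (φ p) (φ p') ≤ φ y := by
  refine convexHull_min ?_ (convex_halfSpace_ge φ.isLinear _) hy
  rintro v (rfl | rfl | rfl | rfl) <;> rw [mem_ofPred_eq]
  · exact min_le_left _ _
  · exact min_le_right _ _
  · exact (min_le_right _ _).trans hq'
  · exact (min_le_left _ _).trans hq

lemma ZMod.exists_three_adjacent (k l : ZMod 3) :
    ∃ i, (k = i ∨ k = i + 1) ∧ (l = i ∨ l = i + 1) := by
  decide +revert

theorem isPreconnected_iUnion_convexHull_inter_halfSpace_lt {E : Type*} [AddCommGroup E]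
    [Module ℝ E] [TopologicalSpace E] [IsTopologicalAddGroup E] [ContinuousSMul ℝ E]
    (φ : E →ₗ[ℝ] ℝ) (c : ℝ) (P Q : ZMod 3 → E) (hPQ : ∀ i, φ (P i) ≤ φ (Q i)) :
    IsPreconnected ((⋃ i, convexHull ℝ {P i, P (i + 1), Q (i + 1), Q i}) ∩ {x | φ x < c}) := by
  set F : ZMod 3 → Set E := fun i ↦ convexHull ℝ {P i, P (i + 1), Q (i + 1), Q i}
  set S := (⋃ i, F i) ∩ {x | φ x < c}
  have hP_mem : ∀ i k, (k = i ∨ k = i + 1) → P k ∈ F i := by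
    rintro i k (rfl | rfl) <;> exact subset_convexHull ℝ _ (by simp)
  have joinedIn_of_mem_face : ∀ i {u w}, u ∈ F i → w ∈ F i → φ u < c → φ w < c →
      JoinedIn S u w := by
    intro i u w hu hw hcu hcw
    have hconv : Convex ℝ (F i ∩ {x | φ x < c}) :=
      (convex_convexHull ℝ _).inter (convex_halfSpace_lt φ.isLinear c)
    exact .of_segment_subset ((hconv.segment_subset ⟨hu, hcu⟩ ⟨hw, hcw⟩).trans
      (inter_subset_inter_left _ (subset_iUnion F i)))
  have exists_bottom_vertex_le : ∀ i, ∀ x ∈ F i, ∃ k, P k ∈ F i ∧ φ (P k) ≤ φ x := by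
    intro i x hx
    have hmin := min_le_of_mem_convexHull_quadrilateral φ (hPQ i) (hPQ (i + 1)) hx
    rcases le_total (φ (P i)) (φ (P (i + 1))) with h | h
    · exact ⟨i, hP_mem i i (.inl rfl), by rwa [min_eq_left h] at hmin⟩
    · exact ⟨i + 1, hP_mem i _ (.inr rfl), by rwa [min_eq_right h] at hmin⟩
  obtain ⟨j, hj⟩ := Finite.exists_min fun i ↦ φ (P i)
  have joinedIn_lowest : ∀ x ∈ S, JoinedIn S x (P j) := by
    rintro x ⟨hx, hxc⟩
    obtain ⟨i, hi⟩ := mem_iUnion.1 hx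
    obtain ⟨k, hk, hkx⟩ := exists_bottom_vertex_le i x hi
    obtain ⟨i', hki', hji'⟩ := ZMod.exists_three_adjacent k j
    have hkc : φ (P k) < c := hkx.trans_lt hxc
    exact (joinedIn_of_mem_face i hi hk hxc hkc).trans <| joinedIn_of_mem_face i'
      (hP_mem _ _ hki') (hP_mem _ _ hji') hkc ((hj k).trans_lt hkc)
  rcases S.eq_empty_or_nonempty with hS | ⟨x, hx⟩
  · rw [hS]
    exact isPreconnected_empty
  · exact IsPathConnected.isConnected ⟨P j, (joinedIn_lowest x hx).target_mem,
      fun {y} hy ↦ (joinedIn_lowest y hy).symm⟩ |>.isPreconnected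

theorem stmt_8_general (a : ZMod 3 → EuclideanSpace ℝ (Fin 2))
    (A B : ZMod 3 → EuclideanSpace ℝ (Fin 2) × ℝ)
    (hA : ∀ i, A i = (a i, (0 : ℝ))) (hB : ∀ i, B i = (a i, (1 : ℝ)))
    (X : Set (EuclideanSpace ℝ (Fin 2) × ℝ))
    (hX : X = ⋃ i : ZMod 3,
      convexHull ℝ ({A i, A (i + 1), B (i + 1), B i} : Set (EuclideanSpace ℝ (Fin 2) × ℝ)))
    (φ : EuclideanSpace ℝ (Fin 2) × ℝ →L[ℝ] ℝ) (c : ℝ) :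
    IsPreconnected (X ∩ {x | φ x < c}) := by
  subst hX
  have hBA : ∀ i, φ (B i) = φ (A i) + φ (0, 1) := fun i ↦ by
    rw [← map_add, hA, hB, Prod.mk_add_mk, add_zero, zero_add]
  rcases le_total 0 (φ (0, 1)) with h | h
  · exact isPreconnected_iUnion_convexHull_inter_halfSpace_lt φ.toLinearMap c A B
      fun i ↦ by simp only [ContinuousLinearMap.coe_coe, hBA]; linarith
  · have hface : ∀ i, ({A i, A (i + 1), B (i + 1), B i} : Set (EuclideanSpace ℝ (Fin 2) × ℝ)) =
        {B i, B (i + 1), A (i + 1), A i} := fun i ↦ by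
      ext
      simp only [mem_insert_iff, mem_singleton_iff]
      tauto
    simp_rw [hface]
    exact isPreconnected_iUnion_convexHull_inter_halfSpace_lt φ.toLinearMap c B A
      fun i ↦ by simp only [ContinuousLinearMap.coe_coe, hBA]; linarith

/-- The union of the three lateral quadrilateral faces of a triangular prism in
`ℝ³ = ℝ² × ℝ` (the paper's tight polyhedral cylinder) is 0-tight. -/
theorem stmt_8 (a : ZMod 3 → EuclideanSpace ℝ (Fin 2))
    (hindep : AffineIndependent ℝ a)
    (A B : ZMod 3 → EuclideanSpace ℝ (Fin 2) × ℝ)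
    (hA : ∀ i, A i = (a i, (0 : ℝ))) (hB : ∀ i, B i = (a i, (1 : ℝ)))
    (X : Set (EuclideanSpace ℝ (Fin 2) × ℝ))
    (hX : X = ⋃ i : ZMod 3,
      convexHull ℝ ({A i, A (i + 1), B (i + 1), B i} : Set (EuclideanSpace ℝ (Fin 2) × ℝ)))
    (φ : EuclideanSpace ℝ (Fin 2) × ℝ →L[ℝ] ℝ) (hφ : φ ≠ 0) (c : ℝ) :
    IsPreconnected (X ∩ {x | φ x < c}) :=
  stmt_8_general a A B hA hB X hX φ c
end
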